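/- (GP-UCB exploration term is dominated by the epistemic value.) Let m ∈ ℝ, let v > 0 be the observation-noise variance, and let v_t be the posterior variance at a query point with 0 < v_t ≤ 1. Set β := (1/2) · log(1 + 1/v). Then β · v_t ≤ ∫ D_KL( N(f, v) ‖ N(m, v_t + v) ) d(N(m, v_t))(f); that is, the square of the GP-UCB exploration bonus β^{1/2} σ_t(x) (with σ_t(x)² = v_t) is bounded above by the mutual information I(f_x; y | D_t) between the latent value and the observation. -/

import Mathlib

/-!
The Kullback–Leibler divergence of `N(f, v)` from `N(m, w)` is
`(log (w / v) + (v + (f - m)²) / w - 1) / 2`.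
Averaging over `f ∼ N(m, v_t)` with `w = v_t + v`, the variance terms cancel and what remains
is `(1/2) log (1 + v_t / v)`. Bernoulli's inequality `(1 + s) ^ p ≤ 1 + p s` for `p ∈ [0, 1]`
then gives `v_t log (1 + 1 / v) ≤ log (1 + v_t / v)`.
-/

open MeasureTheory Real ProbabilityTheory
open scoped ENNReal NNReal

open scoped Classical in
/-- The Kullback–Leibler divergence of a measure `μ` from a measure `ν`
(in `ℝ≥0∞`, infinite unless `μ ≪ ν` and the log-likelihood ratio is
integrable). -/
noncomputable def klDiv {α : Type*} [MeasurableSpace α]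
    (μ ν : Measure α) : ℝ≥0∞ :=
  if μ ≪ ν ∧ Integrable (llr μ ν) μ
  then ENNReal.ofReal (∫ x, llr μ ν x ∂μ) else ⊤

lemma mul_log_one_add_le_log_one_add_mul {s p : ℝ} (hs : -1 < s) (hp0 : 0 ≤ p) (hp1 : p ≤ 1) :
    p * log (1 + s) ≤ log (1 + p * s) := by
  have hpos : 0 < 1 + s := by linarith
  rw [← log_rpow hpos]
  exact log_le_log (rpow_pos_of_pos hpos p) (rpow_one_add_le_one_add_mul_self hs.le hp0 hp1)

lemma toReal_klDiv_eq_integral_llr {α : Type*} [MeasurableSpace α] {μ ν : Measure α}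
    [IsProbabilityMeasure μ] [IsProbabilityMeasure ν] (hμν : μ ≪ ν)
    (h_int : Integrable (llr μ ν) μ) :
    (klDiv μ ν).toReal = ∫ x, llr μ ν x ∂μ := by
  -- Gibbs' inequality: the integral is nonnegative, so `ENNReal.ofReal` loses nothing.
  have h := InformationTheory.integral_llr_add_sub_measure_univ_nonneg hμν h_int
  simp only [probReal_univ, add_sub_cancel_right] at h
  rw [klDiv, if_pos ⟨hμν, h_int⟩, ENNReal.toReal_ofReal h]

namespace ProbabilityTheory

variable {μ : ℝ} {v : ℝ≥0}

lemma integrable_sub_sq_gaussianReal (c : ℝ) :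
    Integrable (fun x ↦ (x - c) ^ 2) (gaussianReal μ v) :=
  ((memLp_id_gaussianReal 2).sub (memLp_const c)).integrable_sq

lemma integral_sub_sq_gaussianReal (c : ℝ) :
    ∫ x, (x - c) ^ 2 ∂gaussianReal μ v = v + (μ - c) ^ 2 := by
  have hmap : (gaussianReal μ v).map (· - c) = gaussianReal (μ - c) v :=
    gaussianReal_map_sub_const c
  have h := variance_eq_sub (μ := gaussianReal (μ - c) v) (memLp_id_gaussianReal 2)
  simp only [variance_id_gaussianReal, Pi.pow_apply, id, integral_id_gaussianReal] at h
  rw [← integral_map (measurable_sub_const c).aemeasurable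
    (continuous_pow 2).aestronglyMeasurable, hmap]
  linarith

lemma log_gaussianPDFReal (hv : v ≠ 0) (x : ℝ) :
    log (gaussianPDFReal μ v x) = -(log (2 * π * v)) / 2 - (x - μ) ^ 2 / (2 * v) := by
  have h2πv : 0 < 2 * π * v := by positivity
  rw [gaussianPDFReal, log_mul (by positivity) (exp_ne_zero _), log_exp, log_inv,
    log_sqrt h2πv.le]
  ring

variable {f m : ℝ} {w : ℝ≥0}

lemma gaussianReal_absolutelyContinuous_gaussianReal (hv : v ≠ 0) (hw : w ≠ 0) :
    gaussianReal f v ≪ gaussianReal m w :=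
  (gaussianReal_absolutelyContinuous f hv).trans (gaussianReal_absolutelyContinuous' m hw)

lemma llr_gaussianReal (hv : v ≠ 0) (hw : w ≠ 0) :
    llr (gaussianReal f v) (gaussianReal m w) =ᵐ[gaussianReal f v]
      fun x ↦ log (gaussianPDFReal f v x) - log (gaussianPDFReal m w x) := by
  have hac := gaussianReal_absolutelyContinuous_gaussianReal (f := f) (m := m) hv hw
  have hfvol := gaussianReal_absolutelyContinuous f hv
  filter_upwards [hac.ae_le (Measure.rnDeriv_eq_div hfvol (gaussianReal_absolutelyContinuous m hw)),
    hfvol (rnDeriv_gaussianReal f v), hac.ae_le ((gaussianReal_absolutelyContinuous m hw)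
      (rnDeriv_gaussianReal m w))] with x hx hf hm
  rw [llr_def]
  simp only [hx, hf, hm, gaussianPDF, ENNReal.toReal_div, ENNReal.toReal_ofReal
    (gaussianPDFReal_nonneg _ _ _)]
  exact log_div (gaussianPDFReal_pos f v x hv).ne' (gaussianPDFReal_pos m w x hw).ne'

lemma toReal_klDiv_gaussianReal (hv : v ≠ 0) (hw : w ≠ 0) :
    (klDiv (gaussianReal f v) (gaussianReal m w)).toReal =
      (log (w / v) + (v + (f - m) ^ 2) / w - 1) / 2 := by
  have hv' : (0 : ℝ) < v := by positivity
  have hw' : (0 : ℝ) < w := by positivity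
  have hllr : llr (gaussianReal f v) (gaussianReal m w) =ᵐ[gaussianReal f v]
      fun x ↦ (log (w / v) + (x - m) ^ 2 / w - (x - f) ^ 2 / v) / 2 := by
    filter_upwards [llr_gaussianReal hv hw] with x hx
    rw [hx, log_gaussianPDFReal hv, log_gaussianPDFReal hw, log_div hw'.ne' hv'.ne',
      log_mul (by positivity) hv'.ne', log_mul (by positivity) hw'.ne']
    ring
  have hm := (integrable_sub_sq_gaussianReal (μ := f) (v := v) m).div_const (w : ℝ)
  have hf := (integrable_sub_sq_gaussianReal (μ := f) (v := v) f).div_const (v : ℝ)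
  have h_int := (((integrable_const (log (w / v))).add hm).sub hf).div_const 2
  rw [toReal_klDiv_eq_integral_llr (gaussianReal_absolutelyContinuous_gaussianReal hv hw)
    (h_int.congr hllr.symm), integral_congr_ae hllr, integral_div,
    integral_sub ((integrable_const _).fun_add hm) hf, integral_add (integrable_const _) hm,
    integral_const, integral_div, integral_div, integral_sub_sq_gaussianReal,
    integral_sub_sq_gaussianReal, sub_self, zero_pow two_ne_zero, add_zero, div_self hv'.ne',
    probReal_univ, one_smul]

lemma integral_toReal_klDiv_gaussianReal_add_var (hv : v ≠ 0) (vt : ℝ≥0) :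
    ∫ f, (klDiv (gaussianReal f v) (gaussianReal m (vt + v))).toReal ∂gaussianReal m vt =
      log (1 + vt / v) / 2 := by
  have hv' : (0 : ℝ) < v := by positivity
  have hkl : ∀ f, (klDiv (gaussianReal f v) (gaussianReal m (vt + v))).toReal =
      (log ((vt + v) / v) + v / (vt + v) - 1 + (f - m) ^ 2 / (vt + v)) / 2 := by
    intro f
    rw [toReal_klDiv_gaussianReal hv (by positivity), NNReal.coe_add]
    ring
  simp_rw [hkl]
  rw [integral_div, integral_add (integrable_const _)
      ((integrable_sub_sq_gaussianReal m).div_const _),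
    integral_const, integral_div, integral_sub_sq_gaussianReal, sub_self, probReal_univ, one_smul,
    one_add_div hv'.ne', add_comm (v : ℝ)]
  field_simp
  ring

end ProbabilityTheory

theorem ucb_exploration_le_mutual_information_general
    (m : ℝ) (v vt : ℝ≥0) (hv : 0 < v) (hvt1 : vt ≤ 1)
    (β : ℝ) (hβ : β = (1 / 2) * Real.log (1 + 1 / (v : ℝ))) :
    β * (vt : ℝ) ≤
      ∫ f, (klDiv (gaussianReal f v) (gaussianReal m (vt + v))).toReal
        ∂(gaussianReal m vt) := by
  rw [integral_toReal_klDiv_gaussianReal_add_var hv.ne', hβ, div_eq_mul_one_div (vt : ℝ)]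
  have h := mul_log_one_add_le_log_one_add_mul
    (neg_one_lt_zero.trans_le (by positivity) : (-1 : ℝ) < 1 / v) vt.coe_nonneg
    (by exact_mod_cast hvt1)
  linarith

/-- GP-UCB exploration term is dominated by the epistemic value: with
`β = (1/2) log (1 + 1/v)` and posterior variance `0 < v_t ≤ 1`, the squared
exploration bonus `β v_t` is bounded above by the mutual information between
the latent value and the noisy observation. -/
theorem ucb_exploration_le_mutual_information
    (m : ℝ) (v vt : ℝ≥0) (hv : 0 < v) (hvt : 0 < vt) (hvt1 : vt ≤ 1)
    (β : ℝ) (hβ : β = (1 / 2) * Real.log (1 + 1 / (v : ℝ))) :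
    β * (vt : ℝ) ≤
      ∫ f, (klDiv (gaussianReal f v) (gaussianReal m (vt + v))).toReal
        ∂(gaussianReal m vt) :=
  ucb_exploration_le_mutual_information_general m v vt hv hvt1 β hβ
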